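/- For integers p, q ≥ 1, one has the direct sum decomposition 𝒫_{p,q}(ℂ²) = ℋ_{p,q}(ℂ²) ⊕ (|z|² + |w|²)·𝒫_{p-1,q-1}(ℂ²), where (|z|²+|w|²)·𝒫_{p-1,q-1} denotes the image of 𝒫_{p-1,q-1} under multiplication by z z̄ + w w̄. -/

import Mathlib

/-!
Write `ρ = z z̄ + w w̄`. The Leibniz rule and Euler's identity give
`Δ(ρ f) = (p + q + 2) f + ρ Δf` for `f ∈ 𝒫_{p,q}`. Applying `Δ` to a relation
`c f + ρ Δf = 0` with `c > 0` yields a relation of the same shape for `Δf`, with larger `c`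
and lower bidegree, so by induction `f = 0`. Hence `f ↦ Δ(ρ f)` is injective, so bijective,
on the finite-dimensional space `𝒫_{p-1,q-1}`. Surjectivity splits `g ∈ 𝒫_{p,q}` as
`(g - ρ f) + ρ f` with `Δ(ρ f) = Δg`, and injectivity says that `ρ f` is harmonic only for
`f = 0`.
-/

open MvPolynomial

/-- The space of complex polynomials in `z, w, z̄, w̄` (variables `0, 1, 2, 3`)
that are homogeneous of degree `p` in `(z, w)` and degree `q` in `(z̄, w̄)`. -/
noncomputable def Ppq (p q : ℕ) : Submodule ℂ (MvPolynomial (Fin 4) ℂ) :=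
  Submodule.span ℂ {f | ∃ a b c d : ℕ, a + b = p ∧ c + d = q ∧
    f = X 0 ^ a * X 1 ^ b * X 2 ^ c * X 3 ^ d}

/-- The Laplacian `Δ = ∂²/∂z∂z̄ + ∂²/∂w∂w̄` as a linear map on polynomials. -/
noncomputable def Lap : MvPolynomial (Fin 4) ℂ →ₗ[ℂ] MvPolynomial (Fin 4) ℂ :=
  (pderiv 2).toLinearMap ∘ₗ (pderiv 0).toLinearMap +
    (pderiv 3).toLinearMap ∘ₗ (pderiv 1).toLinearMap

local notation "ρ" => (X 0 * X 2 + X 1 * X 3 : MvPolynomial (Fin 4) ℂ)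

theorem monomial_mem_Ppq {p q a b c d : ℕ} (hab : a + b = p) (hcd : c + d = q) :
    X 0 ^ a * X 1 ^ b * X 2 ^ c * X 3 ^ d ∈ Ppq p q :=
  Submodule.subset_span ⟨a, b, c, d, hab, hcd, rfl⟩

theorem Ppq_le_iff {p q : ℕ} {N : Submodule ℂ (MvPolynomial (Fin 4) ℂ)} :
    Ppq p q ≤ N ↔ ∀ a b c d : ℕ, a + b = p → c + d = q →
      X 0 ^ a * X 1 ^ b * X 2 ^ c * X 3 ^ d ∈ N := by
  refine Submodule.span_le.trans ⟨fun h a b c d hab hcd ↦ h ⟨a, b, c, d, hab, hcd, rfl⟩, ?_⟩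
  rintro h _ ⟨a, b, c, d, hab, hcd, rfl⟩
  exact h a b c d hab hcd

open Finset in
instance finiteDimensional_Ppq (p q : ℕ) : FiniteDimensional ℂ (Ppq p q) := by
  refine FiniteDimensional.span_of_finite ℂ <|
    (Set.finite_range fun x : antidiagonal p × antidiagonal q ↦
      (X 0 ^ x.1.1.1 * X 1 ^ x.1.1.2 * X 2 ^ x.2.1.1 * X 3 ^ x.2.1.2 :
        MvPolynomial (Fin 4) ℂ)).subset ?_
  rintro _ ⟨a, b, c, d, hab, hcd, rfl⟩
  exact ⟨(⟨(a, b), mem_antidiagonal.2 hab⟩, ⟨(c, d), mem_antidiagonal.2 hcd⟩), rfl⟩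

theorem Ppq_le_homogeneousSubmodule (p q : ℕ) :
    Ppq p q ≤ homogeneousSubmodule (Fin 4) ℂ (p + q) := by
  refine Ppq_le_iff.2 fun a b c d hab hcd ↦ ?_
  rw [mem_homogeneousSubmodule, ← hab, ← hcd, ← add_assoc]
  exact (((isHomogeneous_X_pow _ _).mul (isHomogeneous_X_pow _ _)).mul
    (isHomogeneous_X_pow _ _)).mul (isHomogeneous_X_pow _ _)

theorem mul_ρ_mem_Ppq {p q : ℕ} {f : MvPolynomial (Fin 4) ℂ} (hf : f ∈ Ppq p q) :
    ρ * f ∈ Ppq (p + 1) (q + 1) := by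
  refine (Ppq_le_iff (N := (Ppq _ _).comap (LinearMap.mulLeft ℂ ρ)) |>.2
    (fun a b c d hab hcd ↦ ?_)) hf
  rw [Submodule.mem_comap, LinearMap.mulLeft_apply]
  have : ρ * (X 0 ^ a * X 1 ^ b * X 2 ^ c * X 3 ^ d) =
      X 0 ^ (a + 1) * X 1 ^ b * X 2 ^ (c + 1) * X 3 ^ d +
        X 0 ^ a * X 1 ^ (b + 1) * X 2 ^ c * X 3 ^ (d + 1) := by ring
  rw [this]
  exact add_mem (monomial_mem_Ppq (by omega) (by omega)) (monomial_mem_Ppq (by omega) (by omega))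

-- The truncated exponents `a - 1`, `c - 1` (resp. `b - 1`, `d - 1`) only occur with a zero
-- coefficient when they truncate.
theorem Lap_monomial (a b c d : ℕ) :
    Lap (X 0 ^ a * X 1 ^ b * X 2 ^ c * X 3 ^ d) =
      ((a * c : ℕ) : ℂ) • (X 0 ^ (a - 1) * X 1 ^ b * X 2 ^ (c - 1) * X 3 ^ d) +
      ((b * d : ℕ) : ℂ) • (X 0 ^ a * X 1 ^ (b - 1) * X 2 ^ c * X 3 ^ (d - 1)) := by
  simp only [Lap, LinearMap.add_apply, LinearMap.coe_comp, Function.comp_apply,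
    Derivation.coeFn_coe, Derivation.leibniz, Derivation.leibniz_pow, pderiv_X, Pi.single_apply,
    Fin.reduceEq, if_true, if_false, smul_eq_mul, nsmul_eq_mul, mul_zero, mul_one, zero_add,
    add_zero, Derivation.map_natCast, Nat.cast_mul, smul_eq_C_mul, map_mul, map_natCast]
  ring

theorem Lap_mem_Ppq {p q : ℕ} {f : MvPolynomial (Fin 4) ℂ} (hf : f ∈ Ppq (p + 1) (q + 1)) :
    Lap f ∈ Ppq p q := by
  refine (Ppq_le_iff (N := (Ppq _ _).comap Lap) |>.2 (fun a b c d hab hcd ↦ ?_)) hf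
  rw [Submodule.mem_comap, Lap_monomial]
  refine add_mem ?_ ?_
  · by_cases h : a * c = 0
    · simp [h]
    · obtain ⟨ha, hc⟩ := mul_ne_zero_iff.1 h
      exact Submodule.smul_mem _ _ (monomial_mem_Ppq (by omega) (by omega))
  · by_cases h : b * d = 0
    · simp [h]
    · obtain ⟨hb, hd⟩ := mul_ne_zero_iff.1 h
      exact Submodule.smul_mem _ _ (monomial_mem_Ppq (by omega) (by omega))

theorem Lap_eq_zero_of_mem_Ppq {p q : ℕ} {f : MvPolynomial (Fin 4) ℂ} (hf : f ∈ Ppq p q)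
    (hpq : p = 0 ∨ q = 0) : Lap f = 0 := by
  refine (Ppq_le_iff (N := LinearMap.ker Lap) |>.2 (fun a b c d hab hcd ↦ ?_)) hf
  obtain ⟨rfl, rfl⟩ | ⟨rfl, rfl⟩ : (a = 0 ∧ b = 0) ∨ (c = 0 ∧ d = 0) := by omega
  all_goals rw [LinearMap.mem_ker, Lap_monomial]; simp

theorem Lap_mul_ρ (f : MvPolynomial (Fin 4) ℂ) :
    Lap (ρ * f) = 2 • f + ∑ i, X i * pderiv i f + ρ * Lap f := by
  simp only [Lap, LinearMap.add_apply, LinearMap.coe_comp, Function.comp_apply,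
    Derivation.coeFn_coe, Derivation.leibniz, pderiv_X, Pi.single_apply, Fin.reduceEq, if_true,
    if_false, smul_eq_mul, map_add, mul_zero, mul_one, zero_add, add_zero, Fin.sum_univ_four]
  ring

theorem Lap_mul_ρ_of_mem_Ppq {p q : ℕ} {f : MvPolynomial (Fin 4) ℂ} (hf : f ∈ Ppq p q) :
    Lap (ρ * f) = (p + q + 2 : ℂ) • f + ρ * Lap f := by
  rw [Lap_mul_ρ, (Ppq_le_homogeneousSubmodule p q hf).sum_X_mul_pderiv,
    ← Nat.cast_smul_eq_nsmul ℂ, ← Nat.cast_smul_eq_nsmul ℂ]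
  push_cast
  module

theorem eq_zero_of_smul_add_ρ_mul_Lap_eq_zero {p q : ℕ} {f : MvPolynomial (Fin 4) ℂ}
    (hf : f ∈ Ppq p q) {c : ℝ} (hc : 0 < c) (h : (c : ℂ) • f + ρ * Lap f = 0) : f = 0 := by
  induction p generalizing q f c with
  | zero => simpa [Lap_eq_zero_of_mem_Ppq hf (.inl rfl), hc.ne'] using h
  | succ p ih =>
    obtain _ | q := q
    · simpa [Lap_eq_zero_of_mem_Ppq hf (.inr rfl), hc.ne'] using h
    have hLf : Lap f ∈ Ppq p q := Lap_mem_Ppq hf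
    have hLap : Lap f = 0 := by
      refine ih hLf (c := c + (p + q + 2)) (by positivity) ?_
      have := congrArg Lap h
      rw [map_add, map_smul, Lap_mul_ρ_of_mem_Ppq hLf, map_zero] at this
      push_cast
      linear_combination (norm := module) this
    simpa [hLap, hc.ne'] using h

noncomputable def lapMulρ (p q : ℕ) : Module.End ℂ (Ppq p q) :=
  (Lap ∘ₗ LinearMap.mulLeft ℂ ρ).restrict fun _ hf ↦ by
    simpa using Lap_mem_Ppq (mul_ρ_mem_Ppq hf)

theorem lapMulρ_bijective (p q : ℕ) : Function.Bijective (lapMulρ p q) := by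
  have hinj : Function.Injective (lapMulρ p q) := by
    rw [← LinearMap.ker_eq_bot, Submodule.eq_bot_iff]
    rintro ⟨f, hf⟩ hker
    have h0 : Lap (ρ * f) = 0 := congrArg Subtype.val hker
    rw [Lap_mul_ρ_of_mem_Ppq hf] at h0
    refine Subtype.ext <|
      eq_zero_of_smul_add_ρ_mul_Lap_eq_zero hf (c := p + q + 2) (by positivity) ?_
    push_cast
    exact h0
  exact ⟨hinj, LinearMap.injective_iff_surjective.1 hinj⟩

theorem Ppq_inf_ker_Lap_sup_map_mulLeft_ρ (p q : ℕ) :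
    (Ppq (p + 1) (q + 1) ⊓ LinearMap.ker Lap) ⊔ (Ppq p q).map (LinearMap.mulLeft ℂ ρ) =
      Ppq (p + 1) (q + 1) := by
  refine le_antisymm (sup_le inf_le_left ?_) fun g hg ↦ ?_
  · rintro _ ⟨f, hf, rfl⟩
    exact mul_ρ_mem_Ppq hf
  obtain ⟨⟨f, hf⟩, hfg⟩ := (lapMulρ_bijective p q).2 ⟨Lap g, Lap_mem_Ppq hg⟩
  have hLap : Lap (ρ * f) = Lap g := congrArg Subtype.val hfg
  rw [← sub_add_cancel g (ρ * f)]
  refine Submodule.add_mem_sup ⟨sub_mem hg (mul_ρ_mem_Ppq hf), ?_⟩ ⟨f, hf, rfl⟩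
  change Lap (g - ρ * f) = 0
  rw [map_sub, hLap, sub_self]

theorem Ppq_inf_ker_Lap_inf_map_mulLeft_ρ (p q : ℕ) :
    (Ppq (p + 1) (q + 1) ⊓ LinearMap.ker Lap) ⊓ (Ppq p q).map (LinearMap.mulLeft ℂ ρ) = ⊥ := by
  rw [Submodule.eq_bot_iff]
  rintro _ ⟨⟨-, hker⟩, f, hf, rfl⟩
  have : lapMulρ p q ⟨f, hf⟩ = lapMulρ p q 0 := Subtype.ext <| hker.trans (map_zero _).symm
  have hf0 : f = 0 := congrArg Subtype.val ((lapMulρ_bijective p q).1 this)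
  rw [LinearMap.mulLeft_apply, hf0, mul_zero]

/-- `𝒫_{p,q} = ℋ_{p,q} ⊕ (|z|² + |w|²)·𝒫_{p-1,q-1}`. -/
theorem bidegree_decomposition (p q : ℕ) (hp : 1 ≤ p) (hq : 1 ≤ q) :
    (Ppq p q ⊓ LinearMap.ker Lap) ⊔
        Submodule.map (LinearMap.mulLeft ℂ (X 0 * X 2 + X 1 * X 3))
          (Ppq (p - 1) (q - 1)) = Ppq p q ∧
    (Ppq p q ⊓ LinearMap.ker Lap) ⊓
        Submodule.map (LinearMap.mulLeft ℂ (X 0 * X 2 + X 1 * X 3))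
          (Ppq (p - 1) (q - 1)) = ⊥ := by
  obtain ⟨p, rfl⟩ := Nat.exists_eq_add_of_le' hp
  obtain ⟨q, rfl⟩ := Nat.exists_eq_add_of_le' hq
  exact ⟨Ppq_inf_ker_Lap_sup_map_mulLeft_ρ p q, Ppq_inf_ker_Lap_inf_map_mulLeft_ρ p q⟩
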